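/- Let g : ℝ → ℝ be continuous on [0,T], extended by g(t) = g(min(max(t,0),T)) for all real t. Suppose there exists an integrable function ρ ∈ L¹(0,T) such that (g(t+h) − g(t))/h ≥ ρ(t) for a.e. t ∈ [0,T] and all 0 < h ≤ T − t. Then for all 0 ≤ α < β ≤ T, g(β) − g(α) ≥ ∫_α^β liminf_{h→0⁺} (g(t+h) − g(t))/h dt. -/

import Mathlib

open MeasureTheory Filter Set
open scoped Topology ENNReal

/-! Fatou's lemma, applied to the difference quotients minus their integrable lower bound, gives
`∫ liminf_{h→0+} ≤ liminf_{h→0+} ∫`, and `∫_α^β (g (t + h) - g t) / h dt` is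
`(∫_β^{β+h} g - ∫_α^{α+h} g) / h`, which tends to `g β - g α`. Because `g` is constant beyond `T`,
the bound `min ρ 0` holds for every `h > 0`, not only for `h ≤ T - t`. The liminf is measurable in
`t` since, the quotient being continuous in `h > 0`, it may be taken over rational `h`. -/

theorem ENNReal.ofReal_liminf_sub_le {ι : Type*} {l : Filter ι} {u : ι → ℝ} {a : ℝ}
    (h : ∀ᶠ i in l, a ≤ u i) :
    ENNReal.ofReal (liminf u l - a) ≤ liminf (fun i => ENNReal.ofReal (u i - a)) l := by
  refine le_of_forall_lt_imp_le_of_dense fun y hy => ?_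
  have hy_top : y ≠ ∞ := hy.ne_top
  rw [ENNReal.lt_ofReal_iff_toReal_lt hy_top, liminf_eq] at hy
  obtain ⟨x, hx, hyx⟩ := exists_lt_of_lt_csSup ⟨a, h⟩ (lt_sub_iff_add_lt.mp hy)
  refine le_liminf_of_le (by isBoundedDefault) (hx.mono fun i hi => ?_)
  exact (ENNReal.le_ofReal_iff_toReal_le hy_top (by linarith [y.toReal_nonneg])).mpr (by linarith)

theorem Real.min_zero_le_liminf {ι : Type*} {l : Filter ι} {u : ι → ℝ} {a : ℝ}
    (h : ∀ᶠ i in l, a ≤ u i) : min a 0 ≤ liminf u l := by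
  rw [liminf_eq]
  by_cases hbdd : BddAbove {x | ∀ᶠ i in l, x ≤ u i}
  · exact (min_le_left _ _).trans (le_csSup hbdd h)
  · rw [Real.sSup_of_not_bddAbove hbdd]
    exact min_le_right _ _

theorem liminf_nhdsGT_eq_liminf_ratCast {u : ℝ → ℝ} {x₀ : ℝ} (hu : ContinuousOn u (Ioi x₀)) :
    liminf u (𝓝[>] x₀) = liminf (fun q : ℚ => u q) (comap (↑) (𝓝[>] x₀)) := by
  simp only [liminf_eq]
  congr 1
  ext a
  refine ⟨fun (ha : ∀ᶠ h in _, a ≤ u h) => ha.comap _, fun ha => ?_⟩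
  obtain ⟨δ, hδ, hsub⟩ := mem_nhdsGT_iff_exists_Ioo_subset.mp (eventually_comap.mp ha)
  filter_upwards [Ioo_mem_nhdsGT hδ] with y hy
  have hy_cl : y ∈ closure (Ioo x₀ δ ∩ range ((↑) : ℚ → ℝ)) :=
    Rat.denseRange_cast.open_subset_closure_inter isOpen_Ioo hy
  refine ContinuousWithinAt.closure_le hy_cl continuousWithinAt_const
    (hu.continuousAt (Ioi_mem_nhds hy.1)).continuousWithinAt ?_
  rintro _ ⟨hz, q, rfl⟩
  exact hsub hz q rfl

theorem measurable_liminf_nhdsGT {α : Type*} [MeasurableSpace α] {f : ℝ → α → ℝ} {x₀ : ℝ}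
    (hf : ∀ h, Measurable (f h)) (hcont : ∀ t, ContinuousOn (fun h => f h t) (Ioi x₀)) :
    Measurable fun t => liminf (fun h => f h t) (𝓝[>] x₀) := by
  simp only [liminf_nhdsGT_eq_liminf_ratCast (hcont _)]
  obtain ⟨s, hs⟩ := (comap ((↑) : ℚ → ℝ) (𝓝[>] x₀)).exists_antitone_basis
  exact Measurable.liminf' (fun q => hf q) ⟨hs.toHasBasis, to_countable _⟩
    fun _ => to_countable _

theorem integral_liminf_le_of_tendsto_integral {ι α : Type*} [MeasurableSpace α]
    {μ : Measure α} {l : Filter ι} [l.NeBot] [l.IsCountablyGenerated] {f : ι → α → ℝ}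
    {b : α → ℝ} {s : Set ι} {c : ℝ} (hs : s ∈ l) (hf : ∀ i, Integrable (f i) μ)
    (hb : Integrable b μ) (hbf : ∀ᵐ x ∂μ, ∀ i ∈ s, b x ≤ f i x)
    (hF : AEStronglyMeasurable (fun x => liminf (f · x) l) μ)
    (hc : Tendsto (fun i => ∫ x, f i x ∂μ) l (𝓝 c)) :
    Integrable (fun x => liminf (f · x) l) μ ∧ ∫ x, liminf (f · x) l ∂μ ≤ c := by
  set F := fun x => liminf (f · x) l
  -- `b` itself need not bound `F` from below: where the liminf is `+∞`, `F` takes the junk value 0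
  set b₀ := fun x => min (b x) 0
  have hb₀ : Integrable b₀ μ := hb.inf (integrable_zero _ _ μ)
  have hb₀f : ∀ᵐ x ∂μ, ∀ i ∈ s, b₀ x ≤ f i x :=
    hbf.mono fun x hx i hi => (min_le_left _ _).trans (hx i hi)
  have hb₀F : ∀ᵐ x ∂μ, b₀ x ≤ F x :=
    hbf.mono fun x hx => Real.min_zero_le_liminf (eventually_of_mem hs hx)
  have hb₀c : ∫ x, b₀ x ∂μ ≤ c :=
    ge_of_tendsto hc (eventually_of_mem hs fun i hi =>
      integral_mono_ae hb₀ (hf i) (hb₀f.mono fun x hx => hx i hi))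
  have hlint : ∫⁻ x, ENNReal.ofReal (F x - b₀ x) ∂μ ≤ ENNReal.ofReal (c - ∫ x, b₀ x ∂μ) :=
    calc ∫⁻ x, ENNReal.ofReal (F x - b₀ x) ∂μ
        ≤ ∫⁻ x, liminf (fun i => ENNReal.ofReal (f i x - b₀ x)) l ∂μ := by
          refine lintegral_mono_ae ?_
          filter_upwards [hb₀f] with x hx
          exact ENNReal.ofReal_liminf_sub_le (eventually_of_mem hs hx)
      _ ≤ liminf (fun i => ∫⁻ x, ENNReal.ofReal (f i x - b₀ x) ∂μ) l :=
          lintegral_liminf_le' fun i => ((hf i).sub hb₀).aemeasurable.ennreal_ofReal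
      _ = liminf (fun i => ENNReal.ofReal (∫ x, f i x ∂μ - ∫ x, b₀ x ∂μ)) l := by
          refine liminf_congr (eventually_of_mem hs fun i hi => ?_)
          rw [← integral_sub (hf i) hb₀]
          exact (ofReal_integral_eq_lintegral_ofReal ((hf i).sub hb₀)
            (hb₀f.mono fun x hx => sub_nonneg.mpr (hx i hi))).symm
      _ = ENNReal.ofReal (c - ∫ x, b₀ x ∂μ) :=
          ((ENNReal.continuous_ofReal.tendsto _).comp (hc.sub_const _)).liminf_eq
  have hFb₀ : Integrable (fun x => F x - b₀ x) μ := by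
    refine ⟨hF.sub hb₀.aestronglyMeasurable, ?_⟩
    rw [hasFiniteIntegral_iff_ofReal (hb₀F.mono fun x hx => sub_nonneg.mpr hx)]
    exact hlint.trans_lt ENNReal.ofReal_lt_top
  have hFint : Integrable F μ :=
    (hFb₀.add hb₀).congr (.of_forall fun x => sub_add_cancel (F x) (b₀ x))
  refine ⟨hFint, ?_⟩
  rw [← ofReal_integral_eq_lintegral_ofReal hFb₀ (hb₀F.mono fun x hx => sub_nonneg.mpr hx),
    ENNReal.ofReal_le_ofReal_iff (sub_nonneg.mpr hb₀c), integral_sub hFint hb₀] at hlint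
  linarith

theorem tendsto_integral_div_sub_nhdsGT {g : ℝ → ℝ} (hg : Continuous g) (a b : ℝ) :
    Tendsto (fun h => ∫ t in a..b, (g (t + h) - g t) / h) (𝓝[>] 0) (𝓝 (g b - g a)) := by
  set G := fun u => ∫ t in (0 : ℝ)..u, g t
  have hG : ∀ x, HasDerivAt G (g x) x := fun x => hg.integral_hasStrictDerivAt 0 x |>.hasDerivAt
  have hii : ∀ c d, IntervalIntegrable g volume c d := fun c d => hg.intervalIntegrable c d
  have hGint : ∀ c d, ∫ t in c..d, g t = G d - G c := fun c d =>
    (intervalIntegral.integral_interval_sub_left (hii 0 d) (hii 0 c)).symm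
  refine ((hG b).tendsto_slope_zero_right.sub (hG a).tendsto_slope_zero_right).congr fun h => ?_
  rw [intervalIntegral.integral_div, intervalIntegral.integral_sub (f := fun t => g (t + h))
    ((hg.comp (continuous_add_const h)).intervalIntegrable a b) (hii a b),
    intervalIntegral.integral_comp_add_right g h, hGint, hGint, smul_eq_mul, smul_eq_mul]
  ring

theorem min_zero_le_div_of_eq_on_Ici {g : ℝ → ℝ} {T t r h : ℝ} (hgT : ∀ s, T ≤ s → g s = g T)
    (ht : t < T) (hr : ∀ h, 0 < h → h ≤ T - t → r ≤ (g (t + h) - g t) / h) (hh : 0 < h) :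
    min r 0 ≤ (g (t + h) - g t) / h := by
  rcases le_or_gt h (T - t) with hle | hlt
  · exact (min_le_left _ _).trans (hr h hh hle)
  have hq := hr (T - t) (sub_pos.mpr ht) le_rfl
  rw [add_sub_cancel] at hq
  set q := (g T - g t) / (T - t)
  have hθ : 0 < (T - t) / h := div_pos (sub_pos.mpr ht) hh
  have hθ1 : (T - t) / h ≤ 1 := (div_le_one hh).mpr hlt.le
  have hquot : (g (t + h) - g t) / h = q * ((T - t) / h) := by
    rw [hgT (t + h) (by linarith), mul_div_assoc', div_mul_cancel₀ _ (sub_pos.mpr ht).ne']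
  -- past `T - t` the quotient is the one at `T - t`, scaled by a factor in `(0, 1]`
  rw [hquot]
  rcases le_or_gt 0 q with hq0 | hq0
  · exact (min_le_right _ _).trans (mul_nonneg hq0 hθ.le)
  · exact (min_le_left _ _).trans (hq.trans (by nlinarith))

/-- Lemma 5.2: one-sided differentiation lemma for continuous functions whose forward
difference quotients are bounded below by an integrable function. -/
theorem stmt_4 (T : ℝ) (hT : 0 < T) (g ρ : ℝ → ℝ)
    (hg : ContinuousOn g (Set.Icc 0 T))
    (hext : ∀ t : ℝ, g t = g (min (max t 0) T))
    (hρ : IntegrableOn ρ (Set.Ioc 0 T))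
    (hbd : ∀ᵐ t ∂(volume.restrict (Set.Ioc 0 T)),
      ∀ h : ℝ, 0 < h → h ≤ T - t → ρ t ≤ (g (t + h) - g t) / h) :
    ∀ α β : ℝ, 0 ≤ α → α < β → β ≤ T →
      (∫ t in α..β, liminf (fun h : ℝ => (g (t + h) - g t) / h) (nhdsWithin 0 (Set.Ioi 0)))
        ≤ g β - g α := by
  intro α β hα hαβ hβT
  have hgc : Continuous g := by
    rw [show g = g ∘ fun t => min (max t 0) T from funext hext]
    exact hg.comp_continuous (by fun_prop) fun t =>
      ⟨le_min (le_max_right _ _) hT.le, min_le_right _ _⟩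
  have hgT : ∀ s, T ≤ s → g s = g T := fun s hs => by
    rw [hext s, hext T, min_eq_right (hs.trans (le_max_left _ _)), min_eq_right (le_max_left _ _)]
  have hquot : ∀ h, Continuous fun t => (g (t + h) - g t) / h := fun h => by fun_prop
  have hsub : Ioo α β ⊆ Ioc 0 T := fun t ht => ⟨hα.trans_lt ht.1, ht.2.le.trans hβT⟩
  have hlim := tendsto_integral_div_sub_nhdsGT hgc α β
  simp only [intervalIntegral.integral_of_le hαβ.le, integral_Ioc_eq_integral_Ioo] at hlim ⊢
  refine (integral_liminf_le_of_tendsto_integral self_mem_nhdsWithin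
    (fun h => (hquot h).integrableOn_Icc.mono_set Ioo_subset_Icc_self)
    ((hρ.mono_set hsub).inf (integrable_zero _ _ _)) ?_ ?_ hlim).2
  · filter_upwards [ae_restrict_of_ae_restrict_of_subset hsub hbd,
      ae_restrict_mem measurableSet_Ioo] with t ht htmem h hh
    exact min_zero_le_div_of_eq_on_Ici hgT (htmem.2.trans_le hβT) ht hh
  · refine (measurable_liminf_nhdsGT (fun h => (hquot h).measurable) fun t => ?_)
      |>.aestronglyMeasurable
    exact ((hgc.comp (continuous_const_add t)).sub continuous_const).continuousOn.div
      continuousOn_id fun h hh => hh.ne'
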